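/- The momentum-space Hamiltonian is C₂yT-covariant: let s(k_x,k_y) = (k_x, −k_y) and define the index map τ on ℤ×ℤ×{+1,−1} by τ(m,n,l) = (m−n, −n, −l). Then (i) the vector associated to τ(Q) equals s applied to the vector associated to Q, for every Q (in particular s exchanges κ₊ and κ₋, exchanging the two layers); and (ii) conj(H_{τQ, τQ'}(s k)) = H_{Q,Q'}(k) for all Q, Q' and all k ∈ ℝ². -/

import Mathlib

open Real Complex

noncomputable section
open scoped Classical

/-- The momentum-space lattice index set ℤ×ℤ×{+1,−1} (layer label in ℤˣ = {1,−1}). -/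
abbrev Idx : Type := ℤ × ℤ × ℤˣ

/-- The first-shell moiré reciprocal vectors b₁ = k_θ(1,0), b₂ = R b₁, b₃ = R b₂. -/
def bv (kθ : ℝ) : Fin 3 → ℝ × ℝ
  | 0 => (kθ, 0)
  | 1 => (-(kθ / 2), kθ * Real.sqrt 3 / 2)
  | 2 => (-(kθ / 2), -(kθ * Real.sqrt 3 / 2))

/-- The moiré scattering vectors q₁ = (k_θ/√3)(0,1), q₂ = R q₁, q₃ = R q₂. -/
def qv (kθ : ℝ) : Fin 3 → ℝ × ℝ
  | 0 => (0, kθ / Real.sqrt 3)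
  | 1 => (-(kθ / 2), -(kθ / (2 * Real.sqrt 3)))
  | 2 => (kθ / 2, -(kθ / (2 * Real.sqrt 3)))

/-- κ₊ = (b₁+q₁)/2 = (k_θ/2, k_θ/(2√3)) and κ₋ = (b₁−q₁)/2 = (k_θ/2, −k_θ/(2√3)). -/
def kappa (kθ : ℝ) (l : ℤˣ) : ℝ × ℝ := (kθ / 2, ((l : ℤ) : ℝ) * (kθ / (2 * Real.sqrt 3)))

/-- The vector in ℝ² associated to an index (m,n,l): Q(m,n,l) = m b₁ + n b₂ + κ_l. -/
def vecOf (kθ : ℝ) (Q : Idx) : ℝ × ℝ :=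
  ((Q.1 : ℝ)) • bv kθ 0 + ((Q.2.1 : ℝ)) • bv kθ 1 + kappa kθ Q.2.2

/-- The layer index ζ_Q = ±1. -/
def zetaOf (Q : Idx) : ℤ := ((Q.2.2 : ℤ))

/-- Kronecker delta for vectors in ℝ², valued in ℂ. -/
def deltaV (x y : ℝ × ℝ) : ℂ := if x = y then 1 else 0

/-- Kronecker delta for lattice indices, valued in ℂ. -/
def deltaI (Q Q' : Idx) : ℂ := if Q = Q' then 1 else 0

/-- The squared Euclidean norm on ℝ². -/
def sqn (p : ℝ × ℝ) : ℝ := p.1 ^ 2 + p.2 ^ 2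

/-- The momentum-space Hamiltonian entry
H_{Q,Q'}(k) = −α‖k+Q‖² δ_{Q,Q'}
  + V ∑ᵢ (e^{iψζ_Q} δ_{Q−Q', bᵢ} + e^{−iψζ_Q} δ_{Q−Q', −bᵢ})
  + w ∑ᵢ (δ_{Q−Q', qᵢ} + δ_{Q−Q', −qᵢ}). -/
def Hent (kθ α V w ψ : ℝ) (Q Q' : Idx) (k : ℝ × ℝ) : ℂ :=
  (-(α * sqn (k + vecOf kθ Q)) : ℝ) * deltaI Q Q'
  + (V : ℝ) * ∑ i : Fin 3,
      (Complex.exp (Complex.I * ((ψ * (zetaOf Q : ℝ)) : ℝ))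
          * deltaV (vecOf kθ Q - vecOf kθ Q') (bv kθ i)
        + Complex.exp (-(Complex.I * ((ψ * (zetaOf Q : ℝ)) : ℝ)))
          * deltaV (vecOf kθ Q - vecOf kθ Q') (-bv kθ i))
  + (w : ℝ) * ∑ i : Fin 3,
      (deltaV (vecOf kθ Q - vecOf kθ Q') (qv kθ i)
        + deltaV (vecOf kθ Q - vecOf kθ Q') (-qv kθ i))

end

/-- The momentum reflection s(k_x,k_y) = (k_x, −k_y). -/
def sflip (k : ℝ × ℝ) : ℝ × ℝ := (k.1, -k.2)

/-- The C₂yT index map: τ(m,n,l) = (m−n, −n, −l). -/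
def tauIdx (Q : Idx) : Idx := (Q.1 - Q.2.1, -Q.2.1, -Q.2.2)


-- auxiliary lemmas
lemma sflip_sflip (x : ℝ × ℝ) : sflip (sflip x) = x := by cases x; simp [sflip]

lemma sflip_add (a b : ℝ × ℝ) : sflip (a + b) = sflip a + sflip b := by
  cases a; cases b; simp [sflip, Prod.ext_iff]; ring

lemma sflip_sub (a b : ℝ × ℝ) : sflip (a - b) = sflip a - sflip b := by
  cases a; cases b; simp [sflip, Prod.ext_iff]; ring

lemma sflip_neg (a : ℝ × ℝ) : sflip (-a) = -(sflip a) := by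
  cases a; simp [sflip, Prod.ext_iff]

lemma sqn_sflip (p : ℝ × ℝ) : sqn (sflip p) = sqn p := by
  cases p; simp [sqn, sflip]

lemma deltaV_sflip (x y : ℝ × ℝ) : deltaV (sflip x) y = deltaV x (sflip y) := by
  unfold deltaV
  congr 1
  simp only [eq_iff_iff]
  constructor
  · intro h; rw [← h, sflip_sflip]
  · intro h; rw [h, sflip_sflip]

lemma deltaV_conj (x y : ℝ × ℝ) : (starRingEnd ℂ) (deltaV x y) = deltaV x y := by
  unfold deltaV; split <;> simp

lemma deltaI_conj (Q Q' : Idx) : (starRingEnd ℂ) (deltaI Q Q') = deltaI Q Q' := by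
  unfold deltaI; split <;> simp

lemma deltaI_tau (Q Q' : Idx) : deltaI (tauIdx Q) (tauIdx Q') = deltaI Q Q' := by
  unfold deltaI
  congr 1
  simp only [eq_iff_iff, tauIdx, Prod.ext_iff]
  constructor
  · rintro ⟨h1, h2, h3⟩
    refine ⟨by omega, by omega, by simpa using h3⟩
  · rintro ⟨h1, h2, h3⟩
    exact ⟨by omega, by omega, by rw [h3]⟩

lemma vec_tau (kθ : ℝ) (Q : Idx) : vecOf kθ (tauIdx Q) = sflip (vecOf kθ Q) := by
  obtain ⟨m, n, l⟩ := Q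
  simp only [vecOf, tauIdx, bv, kappa, sflip, Prod.smul_mk, smul_eq_mul, Prod.mk_add_mk,
    Units.val_neg, Int.cast_neg, Int.cast_sub, Prod.ext_iff]
  constructor <;> ring

lemma kappa_flip (kθ : ℝ) (l : ℤˣ) : sflip (kappa kθ l) = kappa kθ (-l) := by
  simp only [sflip, kappa, Units.val_neg, Int.cast_neg, Prod.ext_iff]
  exact ⟨trivial, by ring⟩

lemma sflip_bv0 (kθ : ℝ) : sflip (bv kθ 0) = bv kθ 0 := by simp [sflip, bv]
lemma sflip_bv1 (kθ : ℝ) : sflip (bv kθ 1) = bv kθ 2 := by simp [sflip, bv]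
lemma sflip_bv2 (kθ : ℝ) : sflip (bv kθ 2) = bv kθ 1 := by simp [sflip, bv]
lemma sflip_qv0 (kθ : ℝ) : sflip (qv kθ 0) = -qv kθ 0 := by simp [sflip, qv, Prod.ext_iff]
lemma sflip_qv1 (kθ : ℝ) : sflip (qv kθ 1) = -qv kθ 2 := by simp [sflip, qv, Prod.ext_iff]
lemma sflip_qv2 (kθ : ℝ) : sflip (qv kθ 2) = -qv kθ 1 := by simp [sflip, qv, Prod.ext_iff]

lemma zeta_tau (Q : Idx) : zetaOf (tauIdx Q) = -zetaOf Q := by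
  simp [zetaOf, tauIdx]

/-- C₂yT covariance of the momentum-space Hamiltonian: (i) the vector associated to τ(Q)
is s applied to the vector of Q (in particular s exchanges κ₊ and κ₋, exchanging the two
layers); (ii) conj(H_{τQ,τQ'}(s k)) = H_{Q,Q'}(k). -/
theorem momentum_hamiltonian_C2yT_covariant
    (kθ α V w ψ : ℝ) (hkθ : 0 < kθ) (hα : 0 < α) :
    (∀ Q : Idx, vecOf kθ (tauIdx Q) = sflip (vecOf kθ Q)) ∧
    (∀ l : ℤˣ, sflip (kappa kθ l) = kappa kθ (-l)) ∧
    (∀ (Q Q' : Idx) (k : ℝ × ℝ),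
      (starRingEnd ℂ) (Hent kθ α V w ψ (tauIdx Q) (tauIdx Q') (sflip k))
        = Hent kθ α V w ψ Q Q' k) := by
  refine ⟨vec_tau kθ, kappa_flip kθ, ?_⟩
  intro Q Q' k
  have hd : vecOf kθ (tauIdx Q) - vecOf kθ (tauIdx Q') = sflip (vecOf kθ Q - vecOf kθ Q') := by
    rw [vec_tau, vec_tau, sflip_sub]
  have hs : sflip k + vecOf kθ (tauIdx Q) = sflip (k + vecOf kθ Q) := by
    rw [vec_tau, sflip_add]
  have hz : ((ψ * (zetaOf (tauIdx Q) : ℝ) : ℝ) : ℂ) = -((ψ * (zetaOf Q : ℝ) : ℝ) : ℂ) := by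
    rw [zeta_tau]; push_cast; ring
  simp only [Hent, hd, hs, sqn_sflip, deltaI_tau, Fin.sum_univ_three,
    deltaV_sflip, sflip_neg, sflip_bv0, sflip_bv1, sflip_bv2, sflip_qv0, sflip_qv1, sflip_qv2,
    hz, map_add, map_mul, Complex.conj_ofReal, deltaV_conj, deltaI_conj, ← Complex.exp_conj,
    map_neg, Complex.conj_I, neg_neg]
  ring
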